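/- arXiv:1112.4941 — 4 statements merged into one kernel-verified Lean document; each statement's English description precedes it below -/
import Mathlib

section
/- Under the four-round differential recursion R'_l = L'_{l-1}, L'_l = R'_{l-1} ⊕ (R'_l ∘ P_{l-1}) for l = 1,…,4, if R'_0 = 0 (the zero matrix), then R'_4 = (L'_0 ∘ P_0) ⊕ (L'_0 ∘ P_2) ⊕ (L'_0 ∘ (P_0 P_1 P_2)). -/
/-! Eliminating `L'` turns the recursion into `R'_{l+1} = R'_{l-1} ⊕ (R'_l ∘ P_{l-1})`, a
second-order recursion in `R'` alone; starting from `R'_0 = 0` and `R'_1 = L'_0`, three steps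
give `R'_4`. -/

theorem right_succ_eq_of_rounds {I G : Type*} [AddMonoid G] (P : ℕ → Equiv.Perm I)
    (L' R' : ℕ → I → G) {n : ℕ}
    (h : ∀ l, 1 ≤ l → l ≤ n → R' l = L' (l - 1) ∧ L' l = R' (l - 1) + R' l ∘ ⇑(P (l - 1)))
    (l : ℕ) (hl : 1 ≤ l) (hln : l + 1 ≤ n) :
    R' (l + 1) = R' (l - 1) + R' l ∘ ⇑(P (l - 1)) := by
  rw [(h (l + 1) (by omega) hln).1, Nat.add_sub_cancel, (h l hl (by omega)).2]

/-- four-round differential recursion with `R'₀ = 0` gives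
`R'₄ = (L'₀ ∘ P₀) ⊕ (L'₀ ∘ P₂) ⊕ (L'₀ ∘ (P₀ P₁ P₂))`. -/
theorem stmt_10 {I : Type*} (P : ℕ → Equiv.Perm I) (L' R' : ℕ → I → ZMod 2)
    (h : ∀ l, 1 ≤ l → l ≤ 4 →
      R' l = L' (l - 1) ∧ L' l = R' (l - 1) + (R' l) ∘ ⇑(P (l - 1)))
    (hR0 : R' 0 = 0) :
    R' 4 = (L' 0) ∘ ⇑(P 0) + (L' 0) ∘ ⇑(P 2)
      + (L' 0) ∘ (⇑(P 0) ∘ ⇑(P 1) ∘ ⇑(P 2)) := by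
  have step := right_succ_eq_of_rounds P L' R' h
  have hR1 : R' 1 = L' 0 := (h 1 le_rfl (by norm_num)).1
  have hR2 : R' 2 = L' 0 ∘ ⇑(P 0) := by
    rw [step 1 le_rfl (by norm_num), hR0, hR1, zero_add]
  have hR3 : R' 3 = L' 0 + L' 0 ∘ (⇑(P 0) ∘ ⇑(P 1)) := by
    rw [step 2 (by norm_num) (by norm_num), hR1, hR2]
    rfl
  rw [step 3 (by norm_num) (by norm_num), hR2, hR3, Pi.add_comp, add_assoc]
  rfl
end

section
/- For the one-round cipher with outputs r = V₁ ⊕ L₁ and l = V₂ ⊕ R₁ where R₁ = V₀ ⊕ L₀ and L₁ = R₀ ⊕ (R₁ ∘ P₀) (all over Z_2, with fixed masks V₀, V₁, V₂ and permutation P₀), the following key-independent-of-plaintext identities hold: V₂ ⊕ V₀ = L₀ ⊕ l, and V₁ ⊕ (V₀ ∘ P₀) = r ⊕ R₀ ⊕ (L₀ ∘ P₀). -/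
theorem Pi.charTwo_add_self {I R : Type*} [Semiring R] [CharP R 2] (f : I → R) : f + f = 0 :=
  funext fun i => CharTwo.add_self_eq_zero (f i)

/-- for the one-round cipher `R₁ = V₀ ⊕ L₀`,
`L₁ = R₀ ⊕ (R₁ ∘ P₀)`, `r = V₁ ⊕ L₁`, `l = V₂ ⊕ R₁`, the key combinations
`V₂ ⊕ V₀` and `V₁ ⊕ (V₀ ∘ P₀)` are determined by any plaintext–ciphertext pair. -/
theorem stmt_15 {I : Type*} (V0 V1 V2 : I → ZMod 2) (P0 : Equiv.Perm I)
    (L0 R0 R1 L1 r l : I → ZMod 2)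
    (hR1 : R1 = V0 + L0) (hL1 : L1 = R0 + R1 ∘ ⇑P0)
    (hr : r = V1 + L1) (hl : l = V2 + R1) :
    V2 + V0 = L0 + l ∧
    V1 + V0 ∘ ⇑P0 = r + R0 + L0 ∘ ⇑P0 := by
  subst hR1 hL1 hr hl
  rw [Pi.add_comp]
  constructor
  · calc V2 + V0 = V2 + V0 + (L0 + L0) := by rw [Pi.charTwo_add_self, add_zero]
      _ = L0 + (V2 + (V0 + L0)) := by abel
  · calc V1 + V0 ∘ P0 = V1 + V0 ∘ P0 + (R0 + R0) + (L0 ∘ P0 + L0 ∘ P0) := by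
          rw [Pi.charTwo_add_self, Pi.charTwo_add_self, add_zero, add_zero]
      _ = V1 + (R0 + (V0 ∘ P0 + L0 ∘ P0)) + R0 + L0 ∘ P0 := by abel
end

section
/- For the two-round cipher over Z_2 defined by R_l = V_{l-1} ⊕ L_{l-1}, L_l = R_{l-1} ⊕ (R_l ∘ P_{l-1}) for l = 1,2, and outputs r = V₂ ⊕ L₂, l = V₃ ⊕ R₂, the following identities hold for every input (L₀, R₀): (V₃ ∘ P₁) ⊕ V₂ ⊕ V₀ = (l ∘ P₁) ⊕ r ⊕ L₀, and V₃ ⊕ V₁ ⊕ (V₀ ∘ P₀) = l ⊕ (L₀ ∘ P₀) ⊕ R₀. -/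
/-!
In characteristic two every element is its own negative. Substituting the round equations into
the observable side, `R₂ ∘ P₁` and `L₀` (resp. `R₀` and `L₀ ∘ P₀`) each occur twice and cancel,
leaving exactly the mask combination.
-/

section TwoRound

variable {I R : Type*} [CommRing R] [CharP R 2] (V0 V1 V2 V3 L0 R0 R1 L1 R2 L2 r l : I → R)
  (P0 P1 : I → I)

theorem twoRound_masks_comp_P1_eq (hR1 : R1 = V0 + L0) (hL2 : L2 = R1 + R2 ∘ P1)
    (hr : r = V2 + L2) (hl : l = V3 + R2) :
    V3 ∘ P1 + V2 + V0 = l ∘ P1 + r + L0 := by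
  subst hR1 hL2 hr hl
  funext i
  simp only [Function.comp_apply, Pi.add_apply]
  linear_combination -(R2 (P1 i) + L0 i) * CharTwo.two_eq_zero (R := R)

theorem twoRound_masks_comp_P0_eq (hR1 : R1 = V0 + L0) (hL1 : L1 = R0 + R1 ∘ P0)
    (hR2 : R2 = V1 + L1) (hl : l = V3 + R2) :
    V3 + V1 + V0 ∘ P0 = l + L0 ∘ P0 + R0 := by
  subst hR1 hL1 hR2 hl
  funext i
  simp only [Function.comp_apply, Pi.add_apply]
  linear_combination -(R0 i + L0 (P0 i)) * CharTwo.two_eq_zero (R := R)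

end TwoRound

/-- for the two-round cipher
`R_l = V_{l-1} ⊕ L_{l-1}`, `L_l = R_{l-1} ⊕ (R_l ∘ P_{l-1})` (`l = 1, 2`),
`r = V₂ ⊕ L₂`, `l = V₃ ⊕ R₂`, the identities
`(V₃ ∘ P₁) ⊕ V₂ ⊕ V₀ = (l ∘ P₁) ⊕ r ⊕ L₀` and
`V₃ ⊕ V₁ ⊕ (V₀ ∘ P₀) = l ⊕ (L₀ ∘ P₀) ⊕ R₀` hold for every input. -/
theorem stmt_16 {I : Type*} (V0 V1 V2 V3 : I → ZMod 2) (P0 P1 : Equiv.Perm I)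
    (L0 R0 R1 L1 R2 L2 r l : I → ZMod 2)
    (hR1 : R1 = V0 + L0) (hL1 : L1 = R0 + R1 ∘ ⇑P0)
    (hR2 : R2 = V1 + L1) (hL2 : L2 = R1 + R2 ∘ ⇑P1)
    (hr : r = V2 + L2) (hl : l = V3 + R2) :
    V3 ∘ ⇑P1 + V2 + V0 = l ∘ ⇑P1 + r + L0 ∧
    V3 + V1 + V0 ∘ ⇑P0 = l + L0 ∘ ⇑P0 + R0 :=
  ⟨twoRound_masks_comp_P1_eq V0 V2 V3 L0 R1 R2 L2 r l P1 hR1 hL2 hr hl,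
    twoRound_masks_comp_P0_eq V0 V1 V3 L0 R0 R1 L1 R2 l P0 hR1 hL1 hR2 hl⟩
end

section
/- Knowledge of M₁ = L₀ ⊕ l, N₁ = r ⊕ R₀ ⊕ (L₀ ∘ P₀), and the permutation P₀ (obtained from one plaintext–ciphertext pair of the one-round cipher) suffices to decrypt any other ciphertext (l⋆, r⋆) produced with the same key: the corresponding plaintext satisfies L₀⋆ = l⋆ ⊕ M₁ and R₀⋆ = r⋆ ⊕ (L₀⋆ ∘ P₀) ⊕ N₁. -/
/-!
Both XOR-sums `M₁ = L₀ ⊕ l` and `N₁ = r ⊕ R₀ ⊕ (L₀ ∘ P₀)` cancel the plaintext and depend on the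
key alone: `M₁ = V₀ ⊕ V₂` and `N₁ = V₁ ⊕ (V₀ ∘ P₀)`. Over `Z_2` every element is its own inverse,
so `l⋆ = L₀⋆ ⊕ M₁` and `r⋆ = R₀⋆ ⊕ (L₀⋆ ∘ P₀) ⊕ N₁` can be solved for `L₀⋆` and then `R₀⋆`.
-/

namespace ZModModule

variable {G : Type*} [AddCommGroup G] [Module (ZMod 2) G]

theorem eq_add_of_add_eq {a b c : G} (h : a + b = c) : a = b + c := by
  rw [← h, add_left_comm, add_self, add_zero]

end ZModModule

namespace OneRoundCipher

variable {I G : Type*} [AddCommGroup G] [Module (ZMod 2) G]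
  {V0 V1 V2 L0 R0 R1 L1 r l : I → G} {P : I → I}

theorem left_add_eq_masks (hR1 : R1 = V0 + L0) (hl : l = V2 + R1) : L0 + l = V0 + V2 := by
  subst hR1 hl
  calc L0 + (V2 + (V0 + L0)) = (L0 + L0) + (V0 + V2) := by abel
    _ = V0 + V2 := by rw [ZModModule.add_self, zero_add]

theorem right_add_eq_masks (hR1 : R1 = V0 + L0) (hL1 : L1 = R0 + R1 ∘ P) (hr : r = V1 + L1) :
    r + R0 + L0 ∘ P = V1 + V0 ∘ P := by
  subst hR1 hL1 hr
  calc V1 + (R0 + (V0 + L0) ∘ P) + R0 + L0 ∘ P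
        = (R0 + R0) + (L0 ∘ P + L0 ∘ P) + (V1 + V0 ∘ P) := by rw [Pi.add_comp]; abel
    _ = V1 + V0 ∘ P := by rw [ZModModule.add_self, ZModModule.add_self, add_zero, zero_add]

end OneRoundCipher

/-- the quantities `M₁ = L₀ ⊕ l`, `N₁ = r ⊕ R₀ ⊕ (L₀ ∘ P₀)` and
`P₀`, obtained from one plaintext–ciphertext pair of the one-round cipher,
decrypt any other ciphertext `(l⋆, r⋆)` produced with the same key. -/
theorem stmt_17 {I : Type*} (V0 V1 V2 : I → ZMod 2) (P0 : Equiv.Perm I)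
    (L0 R0 R1 L1 r l : I → ZMod 2)
    (L0s R0s R1s L1s rs ls : I → ZMod 2)
    (hR1 : R1 = V0 + L0) (hL1 : L1 = R0 + R1 ∘ ⇑P0)
    (hr : r = V1 + L1) (hl : l = V2 + R1)
    (hR1s : R1s = V0 + L0s) (hL1s : L1s = R0s + R1s ∘ ⇑P0)
    (hrs : rs = V1 + L1s) (hls : ls = V2 + R1s) :
    L0s = ls + (L0 + l) ∧
    R0s = rs + L0s ∘ ⇑P0 + (r + R0 + L0 ∘ ⇑P0) := by
  constructor
  · rw [OneRoundCipher.left_add_eq_masks hR1 hl]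
    exact ZModModule.eq_add_of_add_eq (OneRoundCipher.left_add_eq_masks hR1s hls)
  · rw [OneRoundCipher.right_add_eq_masks hR1 hL1 hr]
    refine ZModModule.eq_add_of_add_eq ?_
    rw [← OneRoundCipher.right_add_eq_masks hR1s hL1s hrs]
    abel
end
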